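/- arXiv:1309.7481 — 2 statements merged into one kernel-verified Lean document; each statement's English description precedes it below -/
import Mathlib

section
/- Let k be an algebraically closed field of characteristic 0 and let u be the strictly lower triangular 3×3 matrices. For r ≥ 1, the ideal of k[x_i, y_i, z_i : 1 ≤ i ≤ r] defining the commuting variety C_r(u) = {(A₁,...,A_r) ∈ u^r : [A_i,A_j] = 0 for all i,j} is generated by the polynomials x_i z_j - x_j z_i for 1 ≤ i < j ≤ r; that is, an r-tuple of strictly lower triangular 3×3 matrices is pairwise commuting if and only if all 2×2 minors of the 2×r matrix with rows (x₁,...,x_r) and (z₁,...,z_r) vanish. -/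
/-- An `r`-tuple of strictly lower triangular 3×3 matrices is pairwise commuting iff
all 2×2 minors of the 2×r matrix with rows `(x_i)` (entries at (2,1)) and `(z_i)`
(entries at (3,2)) vanish. -/
theorem stmt1 {k : Type*} [Field k] [IsAlgClosed k] [CharZero k]
    (r : ℕ) (hr : 1 ≤ r)
    (A : Fin r → Matrix (Fin 3) (Fin 3) k)
    (hA : ∀ m (i j : Fin 3), i ≤ j → A m i j = 0) :
    (∀ m l, A m * A l = A l * A m) ↔
      ∀ m l : Fin r, A m 1 0 * A l 2 1 - A l 1 0 * A m 2 1 = 0 := by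
  have h00 : ∀ m, A m 0 0 = 0 := fun m => hA m 0 0 le_rfl
  have h01 : ∀ m, A m 0 1 = 0 := fun m => hA m 0 1 (by decide)
  have h02 : ∀ m, A m 0 2 = 0 := fun m => hA m 0 2 (by decide)
  have h11 : ∀ m, A m 1 1 = 0 := fun m => hA m 1 1 le_rfl
  have h12 : ∀ m, A m 1 2 = 0 := fun m => hA m 1 2 (by decide)
  have h22 : ∀ m, A m 2 2 = 0 := fun m => hA m 2 2 le_rfl
  constructor
  · intro h m l
    have := congrFun (congrFun (h m l) 2) 0
    simp [Matrix.mul_apply, Fin.sum_univ_three, h00, h01, h02, h11, h12, h22] at this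
    linear_combination -this
  · intro h m l
    ext i j
    fin_cases i <;> fin_cases j <;>
      simp [Matrix.mul_apply, Fin.sum_univ_three, h00, h01, h02, h11, h12, h22]
    linear_combination -(h m l)
end

section
/- Let k be an algebraically closed field and r ≥ 2. The ring k[x₁,...,x_r, z₁,...,z_r]/I, where I is generated by the 2×2 minors x_i z_j - x_j z_i (1 ≤ i < j ≤ r), is an integral domain. -/
open MvPolynomial Finsupp

namespace Det2

variable (k : Type*) [Field k] (r : ℕ)

/-- The ideal of 2×2 minors. -/
noncomputable def II : Ideal (MvPolynomial (Fin 2 × Fin r) k) :=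
  Ideal.span {p : MvPolynomial (Fin 2 × Fin r) k |
    ∃ i j : Fin r, i < j ∧
      p = X (0, i) * X (1, j) - X (0, j) * X (1, i)}

variable {k r}

lemma s00 (a l : Fin r) (n : ℕ) :
    (single ((0,a) : Fin 2 × Fin r) n) (0,l) = if a = l then n else 0 := by
  simp [Finsupp.single_apply]

lemma s11 (a l : Fin r) (n : ℕ) :
    (single ((1,a) : Fin 2 × Fin r) n) (1,l) = if a = l then n else 0 := by
  simp [Finsupp.single_apply]

lemma s01 (a l : Fin r) (n : ℕ) :
    (single ((0,a) : Fin 2 × Fin r) n) (1,l) = 0 := by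
  simp [Finsupp.single_apply]

lemma s10 (a l : Fin r) (n : ℕ) :
    (single ((1,a) : Fin 2 × Fin r) n) (0,l) = 0 := by
  simp [Finsupp.single_apply]

lemma ext2 (u v : Fin 2 × Fin r →₀ ℕ)
    (h0 : ∀ l, u (0,l) = v (0,l)) (h1 : ∀ l, u (1,l) = v (1,l)) : u = v := by
  ext a
  obtain ⟨c, l⟩ := a
  fin_cases c
  · exact h0 l
  · exact h1 l

lemma minor_mem {i j : Fin r} (h : i ≠ j) :
    (X (0,i) * X (1,j) - X (0,j) * X (1,i) : MvPolynomial (Fin 2 × Fin r) k) ∈ II k r := by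
  rcases h.lt_or_gt with h | h
  · exact Ideal.subset_span ⟨i, j, h, rfl⟩
  · have e : (X (0,i) * X (1,j) - X (0,j) * X (1,i) : MvPolynomial (Fin 2 × Fin r) k)
        = -(X (0,j) * X (1,i) - X (0,i) * X (1,j)) := by ring
    rw [e]
    exact neg_mem (Ideal.subset_span ⟨j, i, h, rfl⟩)

lemma swap_mem (m : Fin 2 × Fin r →₀ ℕ) {i j : Fin r} (h : i ≠ j) :
    ((monomial (m + single (0,i) 1 + single (1,j) 1)) 1
      - (monomial (m + single (0,j) 1 + single (1,i) 1)) 1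
      : MvPolynomial (Fin 2 × Fin r) k) ∈ II k r := by
  have e : ∀ (a b : Fin 2 × Fin r),
      ((monomial (m + single a 1 + single b 1)) 1 : MvPolynomial (Fin 2 × Fin r) k)
        = (monomial m) 1 * (X a * X b) := by
    intro a b
    rw [X, X, monomial_mul, monomial_mul, one_mul, one_mul, add_assoc]
  rw [e, e, ← mul_sub]
  exact Ideal.mul_mem_left _ _ (minor_mem h)

lemma connect : ∀ (n : ℕ) (d d' : Fin 2 × Fin r →₀ ℕ),
    (∑ i, Nat.dist (d (0,i)) (d' (0,i))) ≤ n →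
    (∀ i, d (0,i) + d (1,i) = d' (0,i) + d' (1,i)) →
    (∑ i, d (0,i)) = (∑ i, d' (0,i)) →
    ((monomial d) 1 - (monomial d') 1 : MvPolynomial (Fin 2 × Fin r) k) ∈ II k r := by
  intro n
  induction n with
  | zero =>
    intro d d' hdist hγ _
    have h0 : ∀ i, d (0,i) = d' (0,i) := by
      intro i
      have h := Finset.sum_eq_zero_iff.mp (Nat.le_zero.mp hdist) i (Finset.mem_univ i)
      simp [Nat.dist] at h
      omega
    have hdd : d = d' := ext2 d d' h0 (fun l => by have := hγ l; have := h0 l; omega)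
    rw [hdd, sub_self]
    exact zero_mem _
  | succ n ih =>
    intro d d' hdist hγ hsum
    by_cases hall : ∀ i, d (0,i) = d' (0,i)
    · refine ih d d' ?_ hγ hsum
      have hz : ∀ i : Fin r, Nat.dist (d (0,i)) (d' (0,i)) = 0 := by
        intro i; simp [Nat.dist, hall i]
      simp [hz]
    · push_neg at hall
      obtain ⟨i0, hi0⟩ := hall
      have hex1 : ∃ i, d' (0,i) < d (0,i) := by
        by_contra hc; push_neg at hc
        have : ∑ i, d (0,i) < ∑ i, d' (0,i) :=
          Finset.sum_lt_sum (fun i _ => hc i)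
            ⟨i0, Finset.mem_univ _, lt_of_le_of_ne (hc i0) hi0⟩
        omega
      obtain ⟨i, hi⟩ := hex1
      have hex2 : ∃ j, d (0,j) < d' (0,j) := by
        by_contra hc; push_neg at hc
        have : ∑ l, d' (0,l) < ∑ l, d (0,l) :=
          Finset.sum_lt_sum (fun l _ => hc l) ⟨i, Finset.mem_univ _, hi⟩
        omega
      obtain ⟨j, hj⟩ := hex2
      have hij : i ≠ j := by
        intro h; rw [h] at hi; omega
      have hdi : 1 ≤ d (0,i) := by omega
      have hdj : 1 ≤ d (1,j) := by have := hγ j; omega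
      set m : Fin 2 × Fin r →₀ ℕ := d - single (0,i) 1 - single (1,j) 1 with hm
      set d₂ : Fin 2 × Fin r →₀ ℕ := m + single (0,j) 1 + single (1,i) 1 with hd₂
      have hm0 : ∀ l, m (0,l) = d (0,l) - (if i = l then 1 else 0) := by
        intro l
        rw [hm, Finsupp.tsub_apply, Finsupp.tsub_apply, s00, s10]
        simp
      have hm1 : ∀ l, m (1,l) = d (1,l) - (if j = l then 1 else 0) := by
        intro l
        rw [hm, Finsupp.tsub_apply, Finsupp.tsub_apply, s01, s11]
        simp
      have hd20 : ∀ l, d₂ (0,l) = m (0,l) + (if j = l then 1 else 0) := by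
        intro l
        rw [hd₂, Finsupp.add_apply, Finsupp.add_apply, s00, s10]
        simp
      have hd21 : ∀ l, d₂ (1,l) = m (1,l) + (if i = l then 1 else 0) := by
        intro l
        rw [hd₂, Finsupp.add_apply, Finsupp.add_apply, s01, s11]
        simp
      have hd : d = m + single (0,i) 1 + single (1,j) 1 := by
        refine ext2 _ _ (fun l => ?_) (fun l => ?_)
        · rw [Finsupp.add_apply, Finsupp.add_apply, s00, s10, hm0]
          split_ifs with h1
          · subst h1; omega
          · omega
        · rw [Finsupp.add_apply, Finsupp.add_apply, s01, s11, hm1]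
          split_ifs with h1
          · subst h1; omega
          · omega
      have hv0 : ∀ l, d₂ (0,l) + (if i = l then 1 else 0)
          = d (0,l) + (if j = l then 1 else 0) := by
        intro l
        rw [hd20, hm0]
        split_ifs with h1 h2 h3
        · exact absurd (h1.trans h2.symm) hij
        · subst h1; omega
        · subst h3; omega
        · omega
      have hv1 : ∀ l, d₂ (0,l) + d₂ (1,l) = d (0,l) + d (1,l) := by
        intro l
        rw [hd20, hd21, hm0, hm1]
        split_ifs with h1 h2 h3
        · exact absurd (h1.trans h2.symm) hij
        · subst h1; omega
        · subst h3; omega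
        · omega
      have hsum₂ : ∑ l, d₂ (0,l) = ∑ l, d (0,l) := by
        have h := Finset.sum_congr rfl (fun l (_ : l ∈ Finset.univ) => hv0 l)
        rw [Finset.sum_add_distrib, Finset.sum_add_distrib,
          Finset.sum_ite_eq Finset.univ i (fun _ => 1),
          Finset.sum_ite_eq Finset.univ j (fun _ => 1)] at h
        simp only [Finset.mem_univ, if_true] at h
        omega
      have hdist₂ : ∑ l, Nat.dist (d₂ (0,l)) (d' (0,l)) ≤ n := by
        have key : ∀ l, Nat.dist (d₂ (0,l)) (d' (0,l))
            + ((if i = l then 1 else 0) + (if j = l then 1 else 0))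
            = Nat.dist (d (0,l)) (d' (0,l)) := by
          intro l
          have h := hv0 l
          split_ifs at h ⊢ with h1 h2 h3
          · exact absurd (h1.trans h2.symm) hij
          · subst h1; simp only [Nat.dist] at *; omega
          · subst h3; simp only [Nat.dist] at *; omega
          · simp only [Nat.dist]; omega
        have h := Finset.sum_congr rfl (fun l (_ : l ∈ Finset.univ) => key l)
        rw [Finset.sum_add_distrib, Finset.sum_add_distrib,
          Finset.sum_ite_eq Finset.univ i (fun _ => 1),
          Finset.sum_ite_eq Finset.univ j (fun _ => 1)] at h
        simp only [Finset.mem_univ, if_true] at h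
        -- now: ∑ dist₂ + (1 + 1) = ∑ dist ≤ n+1
        omega
      have h1 : ((monomial d) 1 - (monomial d₂) 1 : MvPolynomial (Fin 2 × Fin r) k) ∈ II k r := by
        rw [hd, hd₂]
        exact swap_mem m hij
      have h2 : ((monomial d₂) 1 - (monomial d') 1 : MvPolynomial (Fin 2 × Fin r) k) ∈ II k r :=
        ih d₂ d' hdist₂ (fun l => (hv1 l).trans (hγ l)) (hsum₂.trans hsum)
      have e : ((monomial d) 1 - (monomial d') 1 : MvPolynomial (Fin 2 × Fin r) k)
          = ((monomial d) 1 - (monomial d₂) 1) + ((monomial d₂) 1 - (monomial d') 1) := by ring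
      rw [e]
      exact Ideal.add_mem _ h1 h2

/-- The exponent transformation corresponding to x_i ↦ a·u_i, z_i ↦ b·u_i. -/
noncomputable def E (d : Fin 2 × Fin r →₀ ℕ) : (Fin 2 ⊕ Fin r) →₀ ℕ :=
  Finsupp.equivFunOnFinite.symm
    (Sum.elim (fun c => ∑ i, d (c,i)) (fun i => d (0,i) + d (1,i)))

@[simp] lemma E_inl (d : Fin 2 × Fin r →₀ ℕ) (c : Fin 2) :
    E d (Sum.inl c) = ∑ i, d (c,i) := rfl

@[simp] lemma E_inr (d : Fin 2 × Fin r →₀ ℕ) (i : Fin r) :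
    E d (Sum.inr i) = d (0,i) + d (1,i) := rfl

lemma E_zero : E (0 : Fin 2 × Fin r →₀ ℕ) = 0 := by
  ext a; cases a <;> simp

lemma E_add (d d' : Fin 2 × Fin r →₀ ℕ) : E (d + d') = E d + E d' := by
  ext a
  cases a with
  | inl c => simp [Finset.sum_add_distrib]
  | inr i => simp; ring

lemma E_single (a : Fin 2 × Fin r) (n : ℕ) :
    E (single a n) = single (Sum.inl a.1) n + single (Sum.inr a.2) n := by
  obtain ⟨c, i⟩ := a
  ext b
  cases b with
  | inl c' =>
    simp only [E_inl, Finsupp.add_apply, Finsupp.single_apply]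
    by_cases hc : c = c'
    · subst hc
      simp [Finsupp.single_apply, Finset.sum_ite_eq]
    · have hz : ∀ l : Fin r, (single ((c,i) : Fin 2 × Fin r) n) (c', l) = 0 := by
        intro l
        rw [Finsupp.single_apply, if_neg]
        intro h
        exact hc (congrArg Prod.fst h)
      simp [hz, hc]
  | inr l =>
    simp only [E_inr, Finsupp.add_apply, Finsupp.single_apply]
    fin_cases c <;> by_cases hl : i = l <;> simp [hl, Prod.ext_iff]

variable (k r) in
/-- The classifying map into `k[a, b, u_1, ..., u_r]`. -/
noncomputable def φ : MvPolynomial (Fin 2 × Fin r) k →ₐ[k] MvPolynomial (Fin 2 ⊕ Fin r) k :=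
  aeval (fun p : Fin 2 × Fin r => X (Sum.inl p.1) * X (Sum.inr p.2))

lemma phi_monomial (d : Fin 2 × Fin r →₀ ℕ) (c : k) :
    φ k r ((monomial d) c) = (monomial (E d)) c := by
  induction d using Finsupp.induction with
  | zero =>
    rw [E_zero]
    simp [φ, aeval_monomial]
  | single_add a n f han hn ihf =>
    have e : ((monomial (single a n + f)) c : MvPolynomial (Fin 2 × Fin r) k)
        = (monomial (single a n)) 1 * (monomial f) c := by
      rw [monomial_mul, one_mul]
    rw [e, map_mul, ihf]
    have e2 : φ k r ((monomial (single a n)) (1 : k)) = (monomial (E (single a n))) 1 := by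
      rw [E_single]
      simp only [φ, aeval_monomial, map_one, one_mul]
      rw [Finsupp.prod_single_index (by simp)]
      rw [mul_pow, X_pow_eq_monomial, X_pow_eq_monomial, monomial_mul, one_mul]
    rw [e2, monomial_mul, one_mul, ← E_add]

lemma II_le_ker : II k r ≤ RingHom.ker (φ k r).toRingHom := by
  rw [II, Ideal.span_le]
  rintro p ⟨i, j, hij, rfl⟩
  simp only [SetLike.mem_coe, RingHom.mem_ker, AlgHom.toRingHom_eq_coe, RingHom.coe_coe]
  simp only [map_sub, map_mul, φ, aeval_X]
  ring

lemma ker_le_II : ∀ (n : ℕ) (f : MvPolynomial (Fin 2 × Fin r) k),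
    f.support.card ≤ n → φ k r f = 0 → f ∈ II k r := by
  intro n
  induction n with
  | zero =>
    intro f hf _
    have hs : f.support = ∅ := Finset.card_eq_zero.mp (Nat.le_zero.mp hf)
    rw [MvPolynomial.support_eq_empty.mp hs]
    exact zero_mem _
  | succ n ih =>
    intro f hf hker
    by_cases h0 : f = 0
    · rw [h0]; exact zero_mem _
    obtain ⟨d₀, hd₀⟩ := (MvPolynomial.support_nonempty.mpr h0)
    set S := f.support.filter (fun d => E d = E d₀) with hS
    have hd₀S : d₀ ∈ S := Finset.mem_filter.mpr ⟨hd₀, rfl⟩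
    have hcoeffsum : ∑ d ∈ S, coeff d f = 0 := by
      have h1 : φ k r f = ∑ d ∈ f.support, (monomial (E d)) (coeff d f) := by
        conv_lhs => rw [f.as_sum]
        rw [map_sum]
        exact Finset.sum_congr rfl fun d _ => phi_monomial d _
      have h2 : coeff (E d₀) (φ k r f)
          = ∑ d ∈ f.support, if E d = E d₀ then coeff d f else 0 := by
        rw [h1, MvPolynomial.coeff_sum]
        exact Finset.sum_congr rfl fun d _ => coeff_monomial _ _ _
      rw [hker, coeff_zero] at h2
      rw [hS, Finset.sum_filter]
      exact h2.symm
    set g := ∑ d ∈ S, coeff d f •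
      (((monomial d) 1 : MvPolynomial (Fin 2 × Fin r) k) - (monomial d₀) 1) with hg
    have hgI : g ∈ II k r := by
      refine Ideal.sum_mem _ fun d hd => ?_
      rw [MvPolynomial.smul_eq_C_mul]
      refine Ideal.mul_mem_left _ _ ?_
      have hE : E d = E d₀ := (Finset.mem_filter.mp hd).2
      refine connect _ d d₀ le_rfl ?_ ?_
      · intro i
        have := DFunLike.congr_fun hE (Sum.inr i)
        simpa using this
      · have := DFunLike.congr_fun hE (Sum.inl 0)
        simpa using this
    have hgval : g = ∑ d ∈ S, (monomial d) (coeff d f) := by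
      rw [hg]
      simp only [smul_sub]
      rw [Finset.sum_sub_distrib, ← Finset.sum_smul, hcoeffsum, zero_smul, sub_zero]
      refine Finset.sum_congr rfl fun d _ => ?_
      simp [MvPolynomial.smul_monomial]
    have hcg : ∀ d, coeff d g = if d ∈ S then coeff d f else 0 := by
      intro d
      rw [hgval, MvPolynomial.coeff_sum]
      have hc : ∀ e ∈ S, coeff d ((monomial e) (coeff e f)) = if e = d then coeff e f else 0 :=
        fun e _ => coeff_monomial _ _ _
      rw [Finset.sum_congr rfl hc, Finset.sum_ite_eq' S d (coeff · f)]
    have hsub : (f - g).support ⊆ f.support.erase d₀ := by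
      intro d hd
      rw [MvPolynomial.mem_support_iff, MvPolynomial.coeff_sub, hcg d] at hd
      by_cases hdS : d ∈ S
      · simp [hdS] at hd
      · simp only [hdS, if_false, sub_zero] at hd
        refine Finset.mem_erase.mpr ⟨?_, MvPolynomial.mem_support_iff.mpr hd⟩
        intro h; exact hdS (h ▸ hd₀S)
    have hcard : (f - g).support.card ≤ n := by
      have h1 := Finset.card_le_card hsub
      rw [Finset.card_erase_of_mem hd₀] at h1
      have h2 : 1 ≤ f.support.card := Finset.card_pos.mpr ⟨d₀, hd₀⟩
      omega
    have hker' : φ k r (f - g) = 0 := by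
      rw [map_sub, hker, zero_sub, neg_eq_zero]
      exact II_le_ker hgI
    have hfg : f - g ∈ II k r := ih (f - g) hcard hker'
    have hsplit : f = (f - g) + g := by ring
    rw [hsplit]
    exact Ideal.add_mem _ hfg hgI

end Det2

open MvPolynomial in
/-- The determinantal ring of 2×2 minors of a generic 2×r matrix is an integral domain. -/
theorem stmt2 {k : Type*} [Field k] [IsAlgClosed k] (r : ℕ) (hr : 2 ≤ r) :
    IsDomain (MvPolynomial (Fin 2 × Fin r) k ⧸
      Ideal.span {p : MvPolynomial (Fin 2 × Fin r) k |
        ∃ i j : Fin r, i < j ∧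
          p = X (0, i) * X (1, j) - X (0, j) * X (1, i)}) := by
  have hI : Ideal.span {p : MvPolynomial (Fin 2 × Fin r) k |
        ∃ i j : Fin r, i < j ∧
          p = X (0, i) * X (1, j) - X (0, j) * X (1, i)}
      = RingHom.ker (Det2.φ k r).toRingHom := by
    refine le_antisymm Det2.II_le_ker ?_
    intro f hf
    exact Det2.ker_le_II f.support.card f le_rfl (RingHom.mem_ker.mp hf)
  rw [hI]
  have : (RingHom.ker (Det2.φ k r).toRingHom).IsPrime := RingHom.ker_isPrime _
  exact Ideal.Quotient.isDomain _
end
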